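/- arXiv:2201.09446 — 4 statements merged into one kernel-verified Lean document; each statement's English description precedes it below -/
import Mathlib

section
/- Let m be a positive integer, c > 0, θ_j = π(1+2j)/(2m), and define G(ρ) = (ic)^{-(2m-1)} (1/m) Σ_{j=0}^{⌊(m-1)/2⌋} 2^{-⌊sin θ_j⌋} e^{-c sin(θ_j) |ρ|} sin( c |ρ| cos θ_j + θ_j ), where ⌊·⌋ is the floor function. Then for every ρ ∈ ℝ: |G(ρ)| ≤ c^{-(2m-1)} e^{-c sin(π/(2m)) |ρ|}. -/
/-- The angles `θ_j = π(1+2j)/(2m)`. -/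
noncomputable def thetaJ (m j : ℕ) : ℝ := Real.pi * (1 + 2 * (j : ℝ)) / (2 * (m : ℝ))

/-- The fundamental solution
`G(ρ) = (ic)^{-(2m-1)} (1/m) Σ_{j=0}^{⌊(m-1)/2⌋} 2^{-⌊sin θ_j⌋}
          e^{-c sin(θ_j)|ρ|} sin(c|ρ| cos θ_j + θ_j)`. -/
noncomputable def Gfun (m : ℕ) (c : ℝ) (ρ : ℝ) : ℂ :=
  (Complex.I * (c : ℂ)) ^ (-(2 * (m : ℤ) - 1)) * (1 / (m : ℂ)) *
    ∑ j ∈ Finset.range ((m - 1) / 2 + 1),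
      (((2 : ℝ) ^ (-⌊Real.sin (thetaJ m j)⌋) *
        Real.exp (-c * Real.sin (thetaJ m j) * |ρ|) *
        Real.sin (c * |ρ| * Real.cos (thetaJ m j) + thetaJ m j) : ℝ) : ℂ)

/-- Pointwise bound for the fundamental solution:
`|G(ρ)| ≤ c^{-(2m-1)} e^{-c sin(π/(2m)) |ρ|}`. -/
theorem stmt_14 (m : ℕ) (hm : 0 < m) (c : ℝ) (hc : 0 < c) (ρ : ℝ) :
    ‖Gfun m c ρ‖ ≤
      c ^ (-(2 * (m : ℤ) - 1)) * Real.exp (-c * Real.sin (Real.pi / (2 * (m : ℝ))) * |ρ|) := by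
  set E := Real.exp (-c * Real.sin (Real.pi / (2 * (m : ℝ))) * |ρ|) with hE
  have hm' : (0:ℝ) < m := by exact_mod_cast hm
  have hpi := Real.pi_pos
  have hE0 : 0 < E := Real.exp_pos _
  -- bound each summand
  have hterm : ∀ j ∈ Finset.range ((m - 1) / 2 + 1),
      |(2 : ℝ) ^ (-⌊Real.sin (thetaJ m j)⌋) *
        Real.exp (-c * Real.sin (thetaJ m j) * |ρ|) *
        Real.sin (c * |ρ| * Real.cos (thetaJ m j) + thetaJ m j)| ≤ E := by
    intro j hj
    rw [Finset.mem_range] at hj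
    have hjm : 2 * j + 1 ≤ m := by omega
    have hjm' : (1 + 2 * (j:ℝ)) ≤ (m:ℝ) := by
      have : ((2 * j + 1 : ℕ) : ℝ) ≤ (m:ℝ) := by exact_mod_cast hjm
      push_cast at this; linarith
    have hθlb : Real.pi / (2 * (m:ℝ)) ≤ thetaJ m j := by
      unfold thetaJ
      rw [div_le_div_iff₀ (by positivity) (by positivity)]
      nlinarith [mul_pos hpi hm', Nat.cast_nonneg (α := ℝ) j]
    have hθub : thetaJ m j ≤ Real.pi / 2 := by
      unfold thetaJ
      rw [div_le_div_iff₀ (by positivity) (by positivity)]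
      nlinarith
    have hlb0 : 0 < Real.pi / (2 * (m:ℝ)) := by positivity
    have hθ0 : 0 ≤ thetaJ m j := le_trans hlb0.le hθlb
    have hsin_mono : Real.sin (Real.pi / (2 * (m:ℝ))) ≤ Real.sin (thetaJ m j) := by
      apply Real.strictMonoOn_sin.monotoneOn _ _ hθlb
      · constructor <;> [linarith; linarith]
      · constructor <;> [linarith; exact hθub]
    have hsin0 : 0 ≤ Real.sin (thetaJ m j) :=
      Real.sin_nonneg_of_nonneg_of_le_pi hθ0 (by linarith)
    have hfl : 0 ≤ ⌊Real.sin (thetaJ m j)⌋ := Int.floor_nonneg.mpr hsin0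
    have h2 : (0:ℝ) < (2:ℝ) ^ (-⌊Real.sin (thetaJ m j)⌋) := by positivity
    have h2le : (2:ℝ) ^ (-⌊Real.sin (thetaJ m j)⌋) ≤ 1 := by
      apply zpow_le_one_of_nonpos₀ (by norm_num) (by omega)
    have hexp : Real.exp (-c * Real.sin (thetaJ m j) * |ρ|) ≤ E := by
      rw [hE]
      apply Real.exp_le_exp.mpr
      have h := mul_le_mul_of_nonneg_right (mul_le_mul_of_nonneg_left hsin_mono hc.le) (abs_nonneg ρ)
      linarith
    have hexp0 : 0 < Real.exp (-c * Real.sin (thetaJ m j) * |ρ|) := Real.exp_pos _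
    calc |(2 : ℝ) ^ (-⌊Real.sin (thetaJ m j)⌋) *
        Real.exp (-c * Real.sin (thetaJ m j) * |ρ|) *
        Real.sin (c * |ρ| * Real.cos (thetaJ m j) + thetaJ m j)|
        ≤ (2 : ℝ) ^ (-⌊Real.sin (thetaJ m j)⌋) *
          Real.exp (-c * Real.sin (thetaJ m j) * |ρ|) * 1 := by
          rw [abs_mul, abs_mul, abs_of_pos h2, abs_of_pos hexp0]
          gcongr
          exact Real.abs_sin_le_one _
      _ ≤ 1 * E * 1 := by gcongr
      _ = E := by ring
  -- cardinality bound
  have hcard : (((m - 1) / 2 + 1 : ℕ) : ℝ) ≤ (m:ℝ) := by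
    have : (m - 1) / 2 + 1 ≤ m := by omega
    exact_mod_cast this
  have habs1 : ‖Complex.I * (c:ℂ)‖ = c := by
    rw [norm_mul, Complex.norm_I, Complex.norm_real, Real.norm_eq_abs, abs_of_pos hc, one_mul]
  have hsum : ‖∑ j ∈ Finset.range ((m - 1) / 2 + 1),
      (((2 : ℝ) ^ (-⌊Real.sin (thetaJ m j)⌋) *
        Real.exp (-c * Real.sin (thetaJ m j) * |ρ|) *
        Real.sin (c * |ρ| * Real.cos (thetaJ m j) + thetaJ m j) : ℝ) : ℂ)‖ ≤ (m:ℝ) * E := by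
    calc ‖_‖ ≤ ∑ j ∈ Finset.range ((m - 1) / 2 + 1),
          ‖(((2 : ℝ) ^ (-⌊Real.sin (thetaJ m j)⌋) *
            Real.exp (-c * Real.sin (thetaJ m j) * |ρ|) *
            Real.sin (c * |ρ| * Real.cos (thetaJ m j) + thetaJ m j) : ℝ) : ℂ)‖ :=
        norm_sum_le _ _
      _ ≤ ∑ j ∈ Finset.range ((m - 1) / 2 + 1), E := by
          apply Finset.sum_le_sum
          intro j hj
          rw [Complex.norm_real, Real.norm_eq_abs]
          exact hterm j hj
      _ = (((m - 1) / 2 + 1 : ℕ) : ℝ) * E := by rw [Finset.sum_const, Finset.card_range, nsmul_eq_mul]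
      _ ≤ (m:ℝ) * E := by gcongr
  rw [Gfun, norm_mul, norm_mul, norm_zpow, habs1, norm_div, norm_one, Complex.norm_natCast]
  have hcz : (0:ℝ) < c ^ (-(2 * (m : ℤ) - 1)) := zpow_pos hc _
  calc c ^ (-(2 * (m : ℤ) - 1)) * (1 / (m:ℝ)) * ‖_‖
      ≤ c ^ (-(2 * (m : ℤ) - 1)) * (1 / (m:ℝ)) * ((m:ℝ) * E) := by
        exact mul_le_mul_of_nonneg_left hsum (by positivity)
    _ = c ^ (-(2 * (m : ℤ) - 1)) * E := by field_simp
end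

section
/- Let a and b be positive real numbers with a > b. Then there exists a constant C₀ > 0 (depending only on a and b) such that for every j ∈ ℤ₊, every R ≥ C₀(j+1), and every ρ ≥ R: ∫_R^{+∞} τ^{-j} e^{-a|ρ-τ| - bτ} dτ ≤ (1/a + 2/(a-b)) e^{-bρ} / ρ^j. -/
open MeasureTheory

lemma aux_exp_Ioi (k ρ : ℝ) (hk : 0 < k) :
    ∫ x in Set.Ioi ρ, Real.exp (-k*x) = Real.exp (-k*ρ)/k := by
  have hd : ∀ x ∈ Set.Ici ρ, HasDerivAt (fun x => -(Real.exp (-k*x)/k)) (Real.exp (-k*x)) x := by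
    intro x _
    have h1 : HasDerivAt (fun x : ℝ => -k*x) (-k) x := by
      simpa using (hasDerivAt_id x).const_mul (-k)
    have := ((h1.exp).div_const k).neg
    refine this.congr_deriv ?_
    rw [mul_neg, neg_div, neg_neg, mul_div_assoc, div_self hk.ne', mul_one]
  have hi : IntegrableOn (fun x => Real.exp (-k*x)) (Set.Ioi ρ) :=
    exp_neg_integrableOn_Ioi ρ hk
  have ht : Filter.Tendsto (fun x => -(Real.exp (-k*x)/k)) Filter.atTop (nhds 0) := by
    have : Filter.Tendsto (fun x : ℝ => -k*x) Filter.atTop Filter.atBot :=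
      (Filter.tendsto_const_mul_atBot_of_neg (by linarith)).mpr Filter.tendsto_id
    have h2 := (Real.tendsto_exp_atBot.comp this).div_const k
    simpa using h2.neg
  have := integral_Ioi_of_hasDerivAt_of_tendsto' hd hi ht
  rw [this]; ring

lemma aux_exp_Ioc (k R ρ : ℝ) (hk : 0 < k) (h : R ≤ ρ) :
    ∫ x in Set.Ioc R ρ, Real.exp (k*x) ≤ Real.exp (k*ρ)/k := by
  rw [← intervalIntegral.integral_of_le h]
  have hd : ∀ x ∈ Set.uIcc R ρ, HasDerivAt (fun x => Real.exp (k*x)/k) (Real.exp (k*x)) x := by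
    intro x _
    have h1 : HasDerivAt (fun x : ℝ => k*x) k x := by
      simpa using (hasDerivAt_id x).const_mul k
    have := (h1.exp).div_const k
    refine this.congr_deriv ?_
    rw [mul_div_assoc, div_self hk.ne', mul_one]
  have hi : IntervalIntegrable (fun x => Real.exp (k*x)) volume R ρ :=
    (Real.continuous_exp.comp (continuous_const.mul continuous_id)).intervalIntegrable R ρ
  rw [intervalIntegral.integral_eq_sub_of_hasDerivAt hd hi]
  have : 0 < Real.exp (k*R)/k := by positivity
  linarith

/-- For `a > b > 0` there is `C₀ > 0` such that for every `j`, `R ≥ C₀(j+1)`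
and `ρ ≥ R`: `∫_R^∞ τ^{-j} e^{-a|ρ-τ|-bτ} dτ ≤ (1/a + 2/(a-b)) e^{-bρ}/ρ^j`. -/
theorem stmt_15 (a b : ℝ) (hb : 0 < b) (hab : b < a) :
    ∃ C₀ : ℝ, 0 < C₀ ∧ ∀ j : ℕ, ∀ R : ℝ, C₀ * ((j : ℝ) + 1) ≤ R → ∀ ρ : ℝ, R ≤ ρ →
      (∫ τ in Set.Ici R, (1 / τ ^ j) * Real.exp (-a * |ρ - τ| - b * τ)) ≤
        (1 / a + 2 / (a - b)) * Real.exp (-b * ρ) / ρ ^ j := by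
  have hc0 : (0:ℝ) < a - b := by linarith
  have ha0 : (0:ℝ) < a := hb.trans hab
  refine ⟨2/(a-b) + 1, by positivity, ?_⟩
  intro j R hR ρ hρR
  have hR0 : (0:ℝ) < R := lt_of_lt_of_le (by positivity) hR
  have hρ0 : (0:ℝ) < ρ := hR0.trans_le hρR
  have hjR : 2 * (j:ℝ) / (a-b) ≤ R := by
    have hj : (0:ℝ) ≤ j := Nat.cast_nonneg j
    have h2 : (0:ℝ) < 2/(a-b) := by positivity
    calc 2*(j:ℝ)/(a-b) = (2/(a-b)) * j := by ring
      _ ≤ (2/(a-b)+1) * ((j:ℝ)+1) := by nlinarith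
      _ ≤ R := hR
  set f : ℝ → ℝ := fun τ => (1 / τ ^ j) * Real.exp (-a * |ρ - τ| - b * τ) with hf
  have hmeas : Measurable f := by
    apply Measurable.mul
    · exact measurable_const.div (measurable_id.pow_const j)
    · exact (((measurable_const.mul ((measurable_const.sub measurable_id).abs)).sub
        (measurable_const.mul measurable_id)).exp)
  have hfi : IntegrableOn f (Set.Ioi R) := by
    have hg : IntegrableOn (fun τ => (1/R^j) * Real.exp (-b * τ)) (Set.Ioi R) :=
      (exp_neg_integrableOn_Ioi R hb).const_mul _
    refine hg.mono' hmeas.aestronglyMeasurable.restrict ?_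
    filter_upwards [ae_restrict_mem measurableSet_Ioi] with τ hτ
    have hτR : R < τ := hτ
    have hτ0 : (0:ℝ) < τ := hR0.trans hτR
    simp only [hf, Real.norm_eq_abs]
    rw [abs_mul, abs_of_nonneg (by positivity : (0:ℝ) ≤ 1/τ^j),
      abs_of_nonneg (Real.exp_nonneg _)]
    have h1 : 1/τ^j ≤ 1/R^j :=
      one_div_le_one_div_of_le (pow_pos hR0 j) (pow_le_pow_left₀ hR0.le hτR.le j)
    have h2 : Real.exp (-a * |ρ - τ| - b * τ) ≤ Real.exp (-b * τ) := by
      apply Real.exp_le_exp.mpr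
      nlinarith [abs_nonneg (ρ - τ), ha0]
    exact mul_le_mul h1 h2 (Real.exp_nonneg _) (by positivity)
  rw [MeasureTheory.integral_Ici_eq_integral_Ioi]
  have hsplit : Set.Ioi R = Set.Ioc R ρ ∪ Set.Ioi ρ := (Set.Ioc_union_Ioi_eq_Ioi hρR).symm
  have hi1 : IntegrableOn f (Set.Ioc R ρ) :=
    hfi.mono_set (by rw [hsplit]; exact Set.subset_union_left)
  have hi2 : IntegrableOn f (Set.Ioi ρ) :=
    hfi.mono_set (by rw [hsplit]; exact Set.subset_union_right)
  rw [hsplit, setIntegral_union (Set.Ioc_disjoint_Ioi le_rfl) measurableSet_Ioi hi1 hi2]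
  -- key1 : bound on Ioc R ρ
  have key1 : (∫ τ in Set.Ioc R ρ, f τ) ≤ 2/(a-b) * (Real.exp (-b*ρ) / ρ^j) := by
    set C : ℝ := (1/ρ^j) * Real.exp (-b*ρ) * Real.exp (-((a-b)/2)*ρ) with hC
    have hC0 : (0:ℝ) ≤ C := by positivity
    have hle : ∀ τ ∈ Set.Ioc R ρ, f τ ≤ C * Real.exp (((a-b)/2)*τ) := by
      intro τ hτ
      obtain ⟨hτR, hτρ⟩ := hτ
      have hτ0 : (0:ℝ) < τ := hR0.trans hτR
      have habs : |ρ - τ| = ρ - τ := abs_of_nonneg (by linarith)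
      have hpow : 1/τ^j ≤ (1/ρ^j) * Real.exp (((a-b)/2)*(ρ-τ)) := by
        have h1 : ρ/τ ≤ Real.exp ((ρ-τ)/τ) := by
          have h0 := Real.add_one_le_exp ((ρ-τ)/τ)
          have h2 : ρ/τ = (ρ-τ)/τ + 1 := by field_simp; ring
          linarith
        have h2 : (ρ/τ)^j ≤ Real.exp ((j:ℝ)*((ρ-τ)/τ)) := by
          rw [Real.exp_nat_mul]
          exact pow_le_pow_left₀ (by positivity) h1 j
        have hjk : (j:ℝ) ≤ ((a-b)/2) * τ := by
          have h3 : 2*(j:ℝ)/(a-b) ≤ τ := le_trans hjR hτR.le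
          rw [div_le_iff₀ hc0] at h3
          nlinarith
        have h3 : (j:ℝ)*((ρ-τ)/τ) ≤ ((a-b)/2)*(ρ-τ) := by
          rw [mul_div_assoc', div_le_iff₀ hτ0]
          nlinarith [mul_le_mul_of_nonneg_right hjk (by linarith : (0:ℝ) ≤ ρ - τ)]
        have h4 : (ρ/τ)^j ≤ Real.exp (((a-b)/2)*(ρ-τ)) :=
          h2.trans (Real.exp_le_exp.mpr h3)
        have h5 : (1:ℝ)/τ^j = (1/ρ^j) * (ρ/τ)^j := by
          rw [div_pow]
          field_simp
        rw [h5]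
        exact mul_le_mul_of_nonneg_left h4 (by positivity)
      have hexp : Real.exp (((a-b)/2)*(ρ-τ)) * Real.exp (-a*(ρ-τ) - b*τ)
          = Real.exp (-b*ρ) * Real.exp (-((a-b)/2)*ρ) * Real.exp (((a-b)/2)*τ) := by
        rw [← Real.exp_add, ← Real.exp_add, ← Real.exp_add]
        congr 1
        ring
      have hfτ : f τ = (1/τ^j) * Real.exp (-a*(ρ-τ) - b*τ) := by
        simp only [hf, habs]
      rw [hfτ]
      calc (1/τ^j) * Real.exp (-a*(ρ-τ) - b*τ)
          ≤ ((1/ρ^j) * Real.exp (((a-b)/2)*(ρ-τ))) * Real.exp (-a*(ρ-τ) - b*τ) :=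
            mul_le_mul_of_nonneg_right hpow (Real.exp_nonneg _)
        _ = C * Real.exp (((a-b)/2)*τ) := by
            rw [hC, mul_assoc, hexp]; ring
    have hgi : IntegrableOn (fun τ => C * Real.exp (((a-b)/2)*τ)) (Set.Ioc R ρ) := by
      apply Continuous.integrableOn_Ioc
      exact continuous_const.mul (Real.continuous_exp.comp (continuous_const.mul continuous_id))
    have hmono := setIntegral_mono_on hi1 hgi measurableSet_Ioc hle
    have hint : (∫ τ in Set.Ioc R ρ, C * Real.exp (((a-b)/2)*τ))
        ≤ C * (Real.exp (((a-b)/2)*ρ) / ((a-b)/2)) := by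
      rw [integral_const_mul]
      exact mul_le_mul_of_nonneg_left (aux_exp_Ioc ((a-b)/2) R ρ (by positivity) hρR) hC0
    have hfin : C * (Real.exp (((a-b)/2)*ρ) / ((a-b)/2)) = 2/(a-b) * (Real.exp (-b*ρ) / ρ^j) := by
      have h1 : Real.exp (-((a-b)/2)*ρ) * Real.exp (((a-b)/2)*ρ) = 1 := by
        rw [← Real.exp_add]; simp
      rw [hC, show (1/ρ^j * Real.exp (-b*ρ) * Real.exp (-((a-b)/2)*ρ)) *
          (Real.exp (((a-b)/2)*ρ) / ((a-b)/2))
          = (Real.exp (-((a-b)/2)*ρ) * Real.exp (((a-b)/2)*ρ)) *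
            (Real.exp (-b*ρ) * (1/ρ^j) * (1/((a-b)/2))) from by ring, h1, one_mul,
        one_div_div]
      ring
    linarith [hmono, hint, hfin ▸ hint]
  -- key2 : bound on Ioi ρ
  have key2 : (∫ τ in Set.Ioi ρ, f τ) ≤ 1/(a+b) * (Real.exp (-b*ρ) / ρ^j) := by
    have hab0 : (0:ℝ) < a + b := by linarith
    set C : ℝ := (1/ρ^j) * Real.exp (a*ρ) with hC
    have hC0 : (0:ℝ) ≤ C := by positivity
    have hle : ∀ τ ∈ Set.Ioi ρ, f τ ≤ C * Real.exp (-(a+b)*τ) := by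
      intro τ hτ
      have hτρ : ρ < τ := hτ
      have hτ0 : (0:ℝ) < τ := hρ0.trans hτρ
      have habs : |ρ - τ| = τ - ρ := by rw [abs_sub_comm]; exact abs_of_nonneg (by linarith)
      have hpow : 1/τ^j ≤ 1/ρ^j :=
        one_div_le_one_div_of_le (pow_pos hρ0 j) (pow_le_pow_left₀ hρ0.le hτρ.le j)
      have hexp : Real.exp (-a*(τ-ρ) - b*τ) = Real.exp (a*ρ) * Real.exp (-(a+b)*τ) := by
        rw [← Real.exp_add]; congr 1; ring
      have hfτ : f τ = (1/τ^j) * Real.exp (-a*(τ-ρ) - b*τ) := by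
        simp only [hf, habs]
      rw [hfτ, hexp, hC]
      rw [mul_assoc]
      exact mul_le_mul_of_nonneg_right hpow (by positivity)
    have hgi : IntegrableOn (fun τ => C * Real.exp (-(a+b)*τ)) (Set.Ioi ρ) :=
      (exp_neg_integrableOn_Ioi ρ hab0).const_mul _
    have hmono := setIntegral_mono_on hi2 hgi measurableSet_Ioi hle
    have hint : (∫ τ in Set.Ioi ρ, C * Real.exp (-(a+b)*τ))
        = C * (Real.exp (-(a+b)*ρ) / (a+b)) := by
      rw [integral_const_mul, aux_exp_Ioi (a+b) ρ hab0]
    have hfin : C * (Real.exp (-(a+b)*ρ) / (a+b)) = 1/(a+b) * (Real.exp (-b*ρ) / ρ^j) := by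
      have h : Real.exp (a*ρ) * Real.exp (-(a+b)*ρ) = Real.exp (-b*ρ) := by
        rw [← Real.exp_add]; congr 1; ring
      rw [hC, show (1/ρ^j * Real.exp (a*ρ)) * (Real.exp (-(a+b)*ρ) / (a+b))
          = (Real.exp (a*ρ) * Real.exp (-(a+b)*ρ)) * ((1/ρ^j) * (1/(a+b))) from by ring, h]
      ring
    linarith [hmono, hint ▸ hmono]
  -- combine
  have hX : (0:ℝ) ≤ Real.exp (-b*ρ) / ρ^j := by positivity
  have h1a : 1/(a+b) ≤ 1/a := one_div_le_one_div_of_le ha0 (by linarith)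
  have hfinal : (1/a + 2/(a-b)) * Real.exp (-b*ρ) / ρ^j
      = (1/a + 2/(a-b)) * (Real.exp (-b*ρ) / ρ^j) := by ring
  rw [hfinal]
  have : 2/(a-b) * (Real.exp (-b*ρ)/ρ^j) + 1/(a+b) * (Real.exp (-b*ρ)/ρ^j)
      ≤ (1/a + 2/(a-b)) * (Real.exp (-b*ρ)/ρ^j) := by
    nlinarith [mul_le_mul_of_nonneg_right h1a hX]
  linarith
end

section
/- Let a and s be positive real numbers. Then for every ε > 0 there exists a constant C_ε > 0 (depending on a, s, ε but not on j) such that for every j ∈ ℤ₊ with j ≥ 1: ∫_0^{+∞} e^{-a ρ log ρ} ρ^{s j} dρ ≤ C_ε ε^j j^{s j}. -/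
open MeasureTheory Set

/-- Pointwise bound: for `m, q, x > 0`, `x^m ≤ (m/(qe))^m e^{qx}`. -/
lemma rpow_le_exp_aux (m q x : ℝ) (hm : 0 < m) (hq : 0 < q) (hx : 0 < x) :
    x ^ m ≤ (m / (q * Real.exp 1)) ^ m * Real.exp (q * x) := by
  have he : (0:ℝ) < Real.exp 1 := Real.exp_pos 1
  rw [Real.rpow_def_of_pos hx, Real.rpow_def_of_pos (by positivity), ← Real.exp_add,
    Real.exp_le_exp]
  have h := Real.log_le_sub_one_of_pos (show 0 < q * x / m by positivity)
  have hlog : Real.log (q * x / m) = Real.log q + Real.log x - Real.log m := by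
    rw [Real.log_div (by positivity) hm.ne', Real.log_mul hq.ne' hx.ne']
  have hlog2 : Real.log (m / (q * Real.exp 1)) = Real.log m - Real.log q - 1 := by
    rw [Real.log_div hm.ne' (by positivity), Real.log_mul hq.ne' he.ne', Real.log_exp]
    ring
  rw [hlog] at h
  have h' : m * (Real.log q + Real.log x - Real.log m) ≤ q * x - m := by
    calc m * (Real.log q + Real.log x - Real.log m)
        ≤ m * (q * x / m - 1) := mul_le_mul_of_nonneg_left h hm.le
      _ = q * x - m := by field_simp
  rw [hlog2]
  nlinarith [h']

lemma integrable_g_aux (a q : ℝ) (ha : 0 < a) (hq : 0 < q) :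
    IntegrableOn (fun ρ : ℝ => Real.exp (-a * ρ * Real.log ρ + q * ρ)) (Ioi (0:ℝ)) := by
  set R : ℝ := max 1 (Real.exp ((q + 1) / a)) with hR
  have hR1 : (1:ℝ) ≤ R := le_max_left _ _
  have hR0 : (0:ℝ) < R := lt_of_lt_of_le one_pos hR1
  have hmeas : Measurable (fun ρ : ℝ => Real.exp (-a * ρ * Real.log ρ + q * ρ)) :=
    Real.measurable_exp.comp ((((measurable_const.mul measurable_id).mul
      Real.measurable_log)).add (measurable_const.mul measurable_id))
  have hsplit : Ioi (0:ℝ) = Ioc 0 R ∪ Ioi R := (Set.Ioc_union_Ioi_eq_Ioi hR0.le).symm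
  rw [hsplit]
  apply IntegrableOn.union
  · apply Integrable.mono' (g := fun _ => Real.exp (q * R + a))
      (integrableOn_const measure_Ioc_lt_top.ne)
      hmeas.aestronglyMeasurable.restrict
    filter_upwards [ae_restrict_mem measurableSet_Ioc] with ρ hρ
    rw [Real.norm_eq_abs, Real.abs_exp, Real.exp_le_exp]
    have hρ0 : 0 < ρ := hρ.1
    have hlogρ : 1 - 1/ρ ≤ Real.log ρ := by
      have h := Real.log_le_sub_one_of_pos (show (0:ℝ) < 1/ρ by positivity)
      rw [one_div, Real.log_inv] at h
      have : (1:ℝ)/ρ = ρ⁻¹ := one_div ρ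
      rw [this]
      linarith
    have h1 : a * ρ * (1 - 1/ρ) ≤ a * ρ * Real.log ρ :=
      mul_le_mul_of_nonneg_left hlogρ (by positivity)
    have h2 : ρ * (1/ρ) = 1 := by field_simp
    have h3 : q * ρ ≤ q * R := mul_le_mul_of_nonneg_left hρ.2 hq.le
    nlinarith
  · apply Integrable.mono' (g := fun ρ : ℝ => Real.exp (-1 * ρ))
      (exp_neg_integrableOn_Ioi R one_pos)
      hmeas.aestronglyMeasurable.restrict
    filter_upwards [ae_restrict_mem measurableSet_Ioi] with ρ hρ
    rw [Real.norm_eq_abs, Real.abs_exp, Real.exp_le_exp]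
    have hρ0 : (0:ℝ) < ρ := lt_trans hR0 hρ
    have hlogρ : (q + 1) / a ≤ Real.log ρ := by
      rw [← Real.log_exp ((q + 1) / a)]
      exact Real.log_le_log (Real.exp_pos _) (le_of_lt (lt_of_le_of_lt (le_max_right _ _) hρ))
    have h1 : a * ρ * ((q + 1) / a) ≤ a * ρ * Real.log ρ :=
      mul_le_mul_of_nonneg_left hlogρ (by positivity)
    have h2 : a * ρ * ((q + 1) / a) = (q + 1) * ρ := by field_simp
    nlinarith

/-- For `a, s > 0` and every `ε > 0` there is `C_ε > 0`, independent of `j`,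
such that `∫_0^∞ e^{-aρ log ρ} ρ^{sj} dρ ≤ C_ε ε^j j^{sj}` for all `j ≥ 1`. -/
theorem stmt_16 (a s : ℝ) (ha : 0 < a) (hs : 0 < s) :
    ∀ ε : ℝ, 0 < ε → ∃ C : ℝ, 0 < C ∧ ∀ j : ℕ, 1 ≤ j →
      (∫ ρ in Set.Ioi (0 : ℝ), Real.exp (-a * ρ * Real.log ρ) * ρ ^ (s * (j : ℝ))) ≤
        C * ε ^ j * (j : ℝ) ^ (s * (j : ℝ)) := by
  intro ε hε
  set b : ℝ := ε ^ (1/s : ℝ) with hb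
  have hb0 : 0 < b := Real.rpow_pos_of_pos hε _
  set q : ℝ := s / (Real.exp 1 * b) with hq
  have hq0 : 0 < q := by positivity
  set g : ℝ → ℝ := fun ρ => Real.exp (-a * ρ * Real.log ρ + q * ρ) with hg
  have hgint : IntegrableOn g (Ioi (0:ℝ)) := integrable_g_aux a q ha hq0
  set A : ℝ := ∫ ρ in Ioi (0:ℝ), g ρ with hA
  have hA0 : 0 ≤ A := setIntegral_nonneg measurableSet_Ioi (fun x _ => (Real.exp_pos _).le)
  refine ⟨max A 1, lt_of_lt_of_le one_pos (le_max_right _ _), ?_⟩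
  intro j hj
  have hj0 : (0:ℝ) < (j:ℝ) := by exact_mod_cast hj
  set K : ℝ := (b * (j:ℝ)) ^ (s * (j:ℝ)) with hK
  have hK0 : 0 ≤ K := Real.rpow_nonneg (by positivity) _
  have hpt : ∀ ρ ∈ Ioi (0:ℝ),
      Real.exp (-a * ρ * Real.log ρ) * ρ ^ (s * (j:ℝ)) ≤ K * g ρ := by
    intro ρ hρ
    have hρ0 : (0:ℝ) < ρ := hρ
    have h1 := rpow_le_exp_aux (s * (j:ℝ)) q ρ (by positivity) hq0 hρ0
    have hbj : s * (j:ℝ) / (q * Real.exp 1) = b * (j:ℝ) := by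
      rw [hq]
      field_simp
    rw [hbj] at h1
    calc Real.exp (-a * ρ * Real.log ρ) * ρ ^ (s * (j:ℝ))
        ≤ Real.exp (-a * ρ * Real.log ρ) * ((b * (j:ℝ)) ^ (s * (j:ℝ)) * Real.exp (q * ρ)) :=
          mul_le_mul_of_nonneg_left h1 (Real.exp_pos _).le
      _ = K * g ρ := by rw [hg]; simp only [Real.exp_add]; ring
  have hmeasf : Measurable (fun ρ : ℝ => Real.exp (-a * ρ * Real.log ρ) * ρ ^ (s * (j:ℝ))) :=
    (Real.measurable_exp.comp ((measurable_const.mul measurable_id).mul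
      Real.measurable_log)).mul (by measurability : Measurable fun ρ : ℝ => ρ ^ (s * (j:ℝ)))
  have hKgint : IntegrableOn (fun ρ => K * g ρ) (Ioi (0:ℝ)) := hgint.const_mul K
  have hfint : IntegrableOn
      (fun ρ : ℝ => Real.exp (-a * ρ * Real.log ρ) * ρ ^ (s * (j:ℝ))) (Ioi (0:ℝ)) := by
    apply Integrable.mono' hKgint hmeasf.aestronglyMeasurable.restrict
    filter_upwards [ae_restrict_mem measurableSet_Ioi] with ρ hρ
    have hρ0 : (0:ℝ) < ρ := hρ
    rw [Real.norm_eq_abs, abs_of_nonneg (by positivity)]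
    exact hpt ρ hρ
  have hmono := setIntegral_mono_on hfint hKgint measurableSet_Ioi hpt
  have hKA : (∫ ρ in Ioi (0:ℝ), K * g ρ) = K * A := by
    rw [hA, MeasureTheory.integral_const_mul]
  rw [hKA] at hmono
  have hstep : K * A ≤ K * max A 1 := mul_le_mul_of_nonneg_left (le_max_left A 1) hK0
  have hKval : K = ε ^ j * (j:ℝ) ^ (s * (j:ℝ)) := by
    rw [hK, Real.mul_rpow hb0.le hj0.le, hb, ← Real.rpow_natCast ε j,
      ← Real.rpow_mul hε.le]
    congr 2
    field_simp
  calc (∫ ρ in Ioi (0:ℝ), Real.exp (-a * ρ * Real.log ρ) * ρ ^ (s * (j:ℝ)))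
      ≤ K * A := hmono
    _ ≤ K * max A 1 := hstep
    _ = max A 1 * ε ^ j * (j:ℝ) ^ (s * (j:ℝ)) := by rw [hKval]; ring
end

section
/- Let s₀ > 1 and let f : ℝ → ℂ be a smooth function such that for every ε > 0 there exists C_ε > 0 with sup_{y ∈ ℝ} |(1+y²) ∂_y^α f(y)| ≤ C_ε ε^α (α!)^{s₀} for every α ∈ ℤ₊. Then for every ε > 0 there exist constants C'_ε > 0 and B > 0 such that the Fourier transform f̂(η) = ∫_ℝ e^{-iyη} f(y) dy satisfies |f̂(η)| ≤ C'_ε e^{-B (|η|/ε)^{1/s₀}} for all η ∈ ℝ. -/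
open MeasureTheory

open Real FourierTransform in
/-- Sub-exponential decay of the Fourier transform of a function in a global
Beurling–Gevrey class of order `s₀` with quadratic weight: if for every `ε > 0`
there is `C_ε > 0` with `|(1+y²) ∂_y^α f(y)| ≤ C_ε ε^α (α!)^{s₀}` for all `α, y`,
then for every `ε > 0` there are `C'_ε, B > 0` with
`|f̂(η)| ≤ C'_ε e^{-B(|η|/ε)^{1/s₀}}` for all `η`. -/
theorem stmt_18 (s₀ : ℝ) (hs₀ : 1 < s₀) (f : ℝ → ℂ) (hf : ContDiff ℝ (⊤ : ℕ∞) f)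
    (hbound : ∀ ε : ℝ, 0 < ε → ∃ C : ℝ, 0 < C ∧ ∀ α : ℕ, ∀ y : ℝ,
      (1 + y ^ 2) * ‖iteratedDeriv α f y‖ ≤
        C * ε ^ α * (Nat.factorial α : ℝ) ^ s₀) :
    ∀ ε : ℝ, 0 < ε → ∃ C' B : ℝ, 0 < C' ∧ 0 < B ∧ ∀ η : ℝ,
      ‖∫ y : ℝ, Complex.exp (-Complex.I * (y : ℂ) * (η : ℂ)) * f y‖ ≤
        C' * Real.exp (-B * (|η| / ε) ^ ((1 : ℝ) / s₀)) := by
  intro ε hε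
  obtain ⟨C, hC, hCb⟩ := hbound ε hε
  have hs₀0 : (0 : ℝ) < s₀ := lt_trans one_pos hs₀
  -- pointwise bound on iterated derivatives
  have hpt : ∀ (n : ℕ) (y : ℝ), ‖iteratedDeriv n f y‖ ≤
      (C * ε ^ n * (Nat.factorial n : ℝ) ^ s₀) * (1 + y ^ 2)⁻¹ := by
    intro n y
    have h1 : (0 : ℝ) < 1 + y ^ 2 := by positivity
    have h2 := hCb n y
    rw [mul_comm] at h2
    rw [← div_eq_mul_inv, le_div_iff₀ h1]
    exact h2
  -- integrability of iterated derivatives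
  have hint : ∀ n : ℕ, Integrable (iteratedDeriv n f) := by
    intro n
    have hcont : Continuous (iteratedDeriv n f) := hf.continuous_iteratedDeriv n (by exact_mod_cast le_top)
    refine ((integrable_inv_one_add_sq).const_mul
      (C * ε ^ n * (Nat.factorial n : ℝ) ^ s₀)).mono' hcont.aestronglyMeasurable ?_
    filter_upwards with y using hpt n y
  -- L¹ bound on iterated derivatives
  have hL1 : ∀ n : ℕ, (∫ y : ℝ, ‖iteratedDeriv n f y‖) ≤
      (C * ε ^ n * (Nat.factorial n : ℝ) ^ s₀) * π := by
    intro n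
    have := integral_mono (hint n).norm
      ((integrable_inv_one_add_sq).const_mul (C * ε ^ n * (Nat.factorial n : ℝ) ^ s₀))
      (hpt n)
    rwa [integral_const_mul, integral_univ_inv_one_add_sq] at this
  -- identification with the Fourier transform
  have hFeq : ∀ η : ℝ, (∫ y : ℝ, Complex.exp (-Complex.I * (y : ℂ) * (η : ℂ)) * f y) =
      𝓕 f (η / (2 * π)) := by
    intro η
    rw [Real.fourier_real_eq_integral_exp_smul]
    congr 1
    ext y
    rw [smul_eq_mul]
    congr 1
    have hsim : (-2 * π * y * (η / (2 * π)) : ℝ) = -(y * η) := by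
      field_simp
    rw [hsim]
    push_cast
    ring
  -- the key estimate obtained by repeated integration by parts
  have key : ∀ (n : ℕ) (η : ℝ),
      |η| ^ n * ‖∫ y : ℝ, Complex.exp (-Complex.I * (y : ℂ) * (η : ℂ)) * f y‖ ≤
      π * (C * ε ^ n * (Nat.factorial n : ℝ) ^ s₀) := by
    intro n η
    have hFd := Real.fourier_iteratedDeriv (N := ⊤) (n := n)
      (hf.of_le (by simp)) (fun m _ => hint m) le_top
    have hb : ‖𝓕 (iteratedDeriv n f) (η / (2 * π))‖ ≤ ∫ v : ℝ, ‖iteratedDeriv n f v‖ :=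
      VectorFourier.norm_fourierIntegral_le_integral_norm 𝐞 volume
        (innerₗ ℝ) (iteratedDeriv n f) (η / (2 * π))
    rw [hFd] at hb
    have h2π : 2 * π * (η / (2 * π)) = η := by
      field_simp
    have hnorm : ‖(2 * π * Complex.I * ((η / (2 * π) : ℝ) : ℂ)) ^ n • 𝓕 f (η / (2 * π))‖ =
        |η| ^ n * ‖𝓕 f (η / (2 * π))‖ := by
      rw [norm_smul, norm_pow]
      congr 2
      have : (2 * π * Complex.I * ((η / (2 * π) : ℝ) : ℂ)) = ((η : ℝ) : ℂ) * Complex.I := by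
        have hπC : (π : ℂ) ≠ 0 := Complex.ofReal_ne_zero.mpr Real.pi_ne_zero
        push_cast
        field_simp
      rw [this, norm_mul, Complex.norm_I, mul_one, Complex.norm_real, Real.norm_eq_abs]
    rw [hnorm] at hb
    rw [hFeq]
    calc |η| ^ n * ‖𝓕 f (η / (2 * π))‖ ≤ (C * ε ^ n * (Nat.factorial n : ℝ) ^ s₀) * π :=
          hb.trans (hL1 n)
      _ = π * (C * ε ^ n * (Nat.factorial n : ℝ) ^ s₀) := by ring
  -- choose constants
  have hπ : (0 : ℝ) < π := Real.pi_pos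
  have hlog2 : 0 < Real.log 2 / 2 := by
    have := Real.log_pos one_lt_two
    linarith
  refine ⟨2 * π * C, Real.log 2 / 2, by positivity, hlog2, ?_⟩
  intro η
  set A : ℝ := ‖∫ y : ℝ, Complex.exp (-Complex.I * (y : ℂ) * (η : ℂ)) * f y‖ with hA
  set t : ℝ := (|η| / ε) ^ ((1 : ℝ) / s₀) with ht
  have ht0 : 0 ≤ t := Real.rpow_nonneg (by positivity) _
  set n : ℕ := ⌊t / 2⌋₊ with hn
  by_cases hη : η = 0
  · have htz : t = 0 := by
      rw [ht, hη, abs_zero, zero_div,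
        Real.zero_rpow (one_div_pos.mpr hs₀0).ne']
    have hkey0 := key 0 η
    simp only [pow_zero, one_mul, Nat.factorial_zero, Nat.cast_one, Real.one_rpow,
      mul_one] at hkey0
    rw [htz]
    simp only [mul_zero, Real.exp_zero, mul_one]
    nlinarith
  · have hηpos : 0 < |η| := abs_pos.mpr hη
    -- bound the factorial term
    have hfact : (Nat.factorial n : ℝ) ^ s₀ ≤ ((n : ℝ) ^ s₀) ^ n := by
      have h1 : (Nat.factorial n : ℝ) ≤ (n : ℝ) ^ n := by
        exact_mod_cast Nat.cast_le.mpr (Nat.factorial_le_pow n)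
      calc (Nat.factorial n : ℝ) ^ s₀ ≤ ((n : ℝ) ^ n) ^ s₀ :=
            Real.rpow_le_rpow (by positivity) h1 hs₀0.le
        _ = ((n : ℝ) ^ s₀) ^ n := by
            rw [← Real.rpow_natCast ((n : ℝ) ^ s₀) n, ← Real.rpow_natCast (n : ℝ) n,
              ← Real.rpow_mul (Nat.cast_nonneg n), ← Real.rpow_mul (Nat.cast_nonneg n),
              mul_comm]
    -- bound ε * n^s₀ by |η|/2
    have hts : t ^ s₀ = |η| / ε := by
      rw [ht, ← Real.rpow_mul (by positivity), one_div, inv_mul_cancel₀ hs₀0.ne',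
        Real.rpow_one]
    have hnle : (n : ℝ) ≤ t / 2 := Nat.floor_le (by positivity)
    have h2s : (2 : ℝ) ≤ (2 : ℝ) ^ s₀ := by
      calc (2 : ℝ) = (2 : ℝ) ^ (1 : ℝ) := (Real.rpow_one 2).symm
        _ ≤ (2 : ℝ) ^ s₀ := Real.rpow_le_rpow_of_exponent_le one_le_two hs₀.le
    have hεn : ε * (n : ℝ) ^ s₀ ≤ |η| / 2 := by
      have h1 : ((n : ℝ)) ^ s₀ ≤ (t / 2) ^ s₀ :=
        Real.rpow_le_rpow (Nat.cast_nonneg n) hnle hs₀0.le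
      have h2 : (t / 2) ^ s₀ = t ^ s₀ / (2 : ℝ) ^ s₀ := Real.div_rpow ht0 (by norm_num : (0:ℝ) ≤ 2) s₀
      have h3 : t ^ s₀ / (2 : ℝ) ^ s₀ ≤ t ^ s₀ / 2 := by
        apply div_le_div_of_nonneg_left (by positivity) (by norm_num) h2s
      have h4 : (n : ℝ) ^ s₀ ≤ (|η| / ε) / 2 := by
        rw [← hts]
        exact h1.trans (h2.trans_le h3)
      calc ε * (n : ℝ) ^ s₀ ≤ ε * ((|η| / ε) / 2) := by
            exact mul_le_mul_of_nonneg_left h4 hε.le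
        _ = |η| / 2 := by field_simp
    have hKn : ε ^ n * (Nat.factorial n : ℝ) ^ s₀ ≤ (|η| / 2) ^ n := by
      calc ε ^ n * (Nat.factorial n : ℝ) ^ s₀ ≤ ε ^ n * ((n : ℝ) ^ s₀) ^ n :=
            mul_le_mul_of_nonneg_left hfact (by positivity)
        _ = (ε * (n : ℝ) ^ s₀) ^ n := (mul_pow _ _ _).symm
        _ ≤ (|η| / 2) ^ n := pow_le_pow_left₀ (by positivity) hεn n
    -- conclude the bound A ≤ π C (1/2)^n
    have hAle : A ≤ π * C * (1 / 2 : ℝ) ^ n := by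
      have h1 : |η| ^ n * A ≤ π * C * (|η| / 2) ^ n := by
        calc |η| ^ n * A ≤ π * (C * ε ^ n * (Nat.factorial n : ℝ) ^ s₀) := key n η
          _ = π * C * (ε ^ n * (Nat.factorial n : ℝ) ^ s₀) := by ring
          _ ≤ π * C * (|η| / 2) ^ n := mul_le_mul_of_nonneg_left hKn (by positivity)
      have h2 : A ≤ π * C * (|η| / 2) ^ n / |η| ^ n := by
        rw [le_div_iff₀ (pow_pos hηpos n)]
        calc A * |η| ^ n = |η| ^ n * A := mul_comm _ _
          _ ≤ _ := h1
      have h3 : π * C * (|η| / 2) ^ n / |η| ^ n = π * C * (1 / 2 : ℝ) ^ n := by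
        rw [mul_div_assoc, ← div_pow]
        congr 2
        field_simp
      rwa [h3] at h2
    -- turn the geometric factor into sub-exponential decay
    have hgeo : ((1 : ℝ) / 2) ^ n ≤ 2 * Real.exp (-(Real.log 2 / 2) * t) := by
      have h1 : ((1 : ℝ) / 2) ^ n = (2 : ℝ) ^ (-(n : ℝ)) := by
        rw [Real.rpow_neg (by norm_num), Real.rpow_natCast, one_div, inv_pow]
      have h2 : -(n : ℝ) ≤ 1 - t / 2 := by
        have := Nat.sub_one_lt_floor (t / 2)
        rw [← hn] at this
        linarith
      have h3 : (2 : ℝ) ^ (-(n : ℝ)) ≤ (2 : ℝ) ^ (1 - t / 2) :=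
        Real.rpow_le_rpow_of_exponent_le one_le_two h2
      have h4 : (2 : ℝ) ^ (1 - t / 2) = 2 * Real.exp (-(Real.log 2 / 2) * t) := by
        rw [Real.rpow_def_of_pos (by norm_num : (0 : ℝ) < 2)]
        have : Real.log 2 * (1 - t / 2) = Real.log 2 + -(Real.log 2 / 2) * t := by ring
        rw [this, Real.exp_add, Real.exp_log (by norm_num : (0 : ℝ) < 2)]
      rw [h1]
      exact h3.trans_eq h4
    calc A ≤ π * C * ((1 / 2 : ℝ) ^ n) := hAle
      _ ≤ π * C * (2 * Real.exp (-(Real.log 2 / 2) * t)) :=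
          mul_le_mul_of_nonneg_left hgeo (by positivity)
      _ = 2 * π * C * Real.exp (-(Real.log 2 / 2) * t) := by ring
end
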